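/- Recursion in the target argument: with the same definitions, l_s(Z | X ∪ {x_{n+1}}) = (1 - p_d(x_{n+1})) · l_s(Z | X) + ∑_{j=1}^m l̃(z_j | {x_{n+1}}) · l_s(Z \ {z_j} | X) for x_{n+1} ∉ X and Z = {z₁,...,z_m}. -/

import Mathlib

open Finset

/-- Single-target likelihood `ĺ(S | x)`: `1 - p_d(x)` for `S = ∅`,
`p_d(x) p(z|x)` for `S = {z}`, and `0` for `|S| > 1`. -/
noncomputable def lhat {α β : Type*} [DecidableEq β] (pd : α → ℝ)
    (pz : β → α → ℝ) (S : Finset β) (x : α) : ℝ :=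
  if S = ∅ then 1 - pd x else if S.card = 1 then pd x * ∑ z ∈ S, pz z x else 0

/-- Measurement-origin likelihood `l̃(z | Y)`: `c(z)` for `Y = ∅`,
`p_d(y) p(z|y)` for `Y = {y}`, and `0` for `|Y| > 1`. -/
noncomputable def ltilde {α β : Type*} [DecidableEq α] (pd : α → ℝ)
    (pz : β → α → ℝ) (c : β → ℝ) (z : β) (Y : Finset α) : ℝ :=
  if Y = ∅ then c z else if Y.card = 1 then ∑ y ∈ Y, pd y * pz z y else 0

/-- Target-indexed standard point-target likelihood (up to the common constant
`e^{-λ_c}`): the sum over ordered decompositions `Z = Z^c ⊎ (Z_x)_{x∈X}`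
(encoded by `ψ : Z → Option X`) of `[c]^{Z^c} ∏_{x∈X} ĺ(Z_x | x)`. -/
noncomputable def stdLik {α β : Type*} [DecidableEq α] [DecidableEq β]
    (pd : α → ℝ) (pz : β → α → ℝ) (c : β → ℝ)
    (Z : Finset β) (X : Finset α) : ℝ :=
  ∑ ψ : {z // z ∈ Z} → Option {x // x ∈ X},
    (∏ z ∈ (Finset.univ.filter (fun z => ψ z = none)).image Subtype.val, c z) *
      ∏ x : {x // x ∈ X},
        lhat pd pz ((Finset.univ.filter (fun z => ψ z = some x)).image Subtype.val) x.1

/-- Measurement-indexed likelihood representation (up to `e^{-λ_c}`): the sum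
over ordered decompositions `X = U ⊎ (Y_z)_{z∈Z}` (encoded by
`φ : X → Option Z`) of `[1-p_d]^U ∏_{z∈Z} l̃(z | Y_z)`. -/
noncomputable def lsLik {α β : Type*} [DecidableEq α] [DecidableEq β]
    (pd : α → ℝ) (pz : β → α → ℝ) (c : β → ℝ)
    (Z : Finset β) (X : Finset α) : ℝ :=
  ∑ φ : {x // x ∈ X} → Option {z // z ∈ Z},
    (∏ u ∈ (Finset.univ.filter (fun a => φ a = none)).image Subtype.val, (1 - pd u)) *
      ∏ z : {z // z ∈ Z},
        ltilde pd pz c z.1 ((Finset.univ.filter (fun a => φ a = some z)).image Subtype.val)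

/-!
Classify the decompositions of `insert x X` by the block that receives `x`. If `x` is
undetected, the weight gains the factor `1 - p_d(x)` and what remains is a decomposition of `X`.
If `x` generates `z`, the block `Y_z` must be exactly `{x}` because `l̃(z | Y) = 0` once
`|Y| > 1`; the weight is then `l̃(z | {x})` times the weight of a decomposition of `X` over
`Z \ {z}`.
-/

open Function

section Fiber

variable {α γ : Type*} [DecidableEq α] [DecidableEq γ] {X : Finset α}

def fiber (f : {a // a ∈ X} → γ) (w : γ) : Finset α :=
  (univ.filter (fun a => f a = w)).image Subtype.val

theorem mem_fiber {f : {a // a ∈ X} → γ} {w : γ} {b : α} :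
    b ∈ fiber f w ↔ ∃ h : b ∈ X, f ⟨b, h⟩ = w := by
  simp [fiber]

theorem notMem_fiber {x : α} (hx : x ∉ X) (f : {a // a ∈ X} → γ) (w : γ) : x ∉ fiber f w :=
  fun h => hx (mem_fiber.mp h).1

theorem fiber_eq_empty_iff {f : {a // a ∈ X} → γ} {w : γ} : fiber f w = ∅ ↔ ∀ a, f a ≠ w := by
  simp [fiber, filter_eq_empty_iff]

theorem fiber_comp_of_injective {δ : Type*} [DecidableEq δ] {e : δ → γ} (he : Injective e)
    (f : {a // a ∈ X} → δ) {d : δ} {w : γ} (hd : e d = w) : fiber (e ∘ f) w = fiber f d := by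
  ext b
  simp only [mem_fiber, comp_apply, ← hd, he.eq_iff]

def insertArrowEquiv {x : α} (hx : x ∉ X) :
    ({a // a ∈ insert x X} → γ) ≃ γ × ({a // a ∈ X} → γ) :=
  ((subtypeInsertEquivOption hx).arrowCongr (Equiv.refl γ)).trans Equiv.piOptionEquivProd

theorem fiber_insertArrowEquiv_symm {x : α} (hx : x ∉ X) (v : γ) (f : {a // a ∈ X} → γ)
    (w : γ) :
    fiber ((insertArrowEquiv hx).symm (v, f)) w =
      if v = w then insert x (fiber f w) else fiber f w := by
  ext b
  by_cases hb : b = x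
  · subst hb
    split_ifs with h <;> simp [mem_fiber, insertArrowEquiv, subtypeInsertEquivOption, h, hx]
  · split_ifs <;> simp [mem_fiber, insertArrowEquiv, subtypeInsertEquivOption, hb]

end Fiber

section Erase

variable {β : Type*} [DecidableEq β]

def eraseInclusion (Z : Finset β) (z₀ : β) : {z // z ∈ Z.erase z₀} ↪ {z // z ∈ Z} :=
  Subtype.impEmbedding _ _ fun _ => mem_of_mem_erase

theorem coe_eraseInclusion {Z : Finset β} {z₀ : β} (d : {z // z ∈ Z.erase z₀}) :
    (eraseInclusion Z z₀ d : β) = d :=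
  rfl

theorem eraseInclusion_ne {Z : Finset β} (z₀ : {z // z ∈ Z}) (d : {z // z ∈ Z.erase z₀}) :
    eraseInclusion Z z₀ d ≠ z₀ :=
  fun h => (mem_erase.mp d.2).1 (congrArg Subtype.val h)

theorem map_univ_eraseInclusion {Z : Finset β} (z₀ : {z // z ∈ Z}) :
    univ.map (eraseInclusion Z z₀) = {z₀}ᶜ := by
  ext z
  simp only [mem_map, mem_univ, true_and, mem_compl, mem_singleton]
  constructor
  · rintro ⟨d, rfl⟩
    exact eraseInclusion_ne z₀ d
  · intro h
    exact ⟨⟨z, mem_erase.mpr ⟨fun h' => h (Subtype.ext h'), z.2⟩⟩, rfl⟩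

theorem exists_optionMap_eraseInclusion {Z : Finset β} {z₀ : {z // z ∈ Z}}
    {w : Option {z // z ∈ Z}} (hw : w ≠ some z₀) :
    ∃ d, Option.map (eraseInclusion Z z₀) d = w := by
  rcases w with _ | z
  · exact ⟨none, rfl⟩
  · have hz : z.1 ∈ Z.erase z₀ := mem_erase.mpr ⟨fun h => hw (by rw [Subtype.ext h]), z.2⟩
    exact ⟨some ⟨z, hz⟩, rfl⟩

end Erase

section Likelihood

variable {α β : Type*} [DecidableEq α] (pd : α → ℝ) (pz : β → α → ℝ) (c : β → ℝ)

theorem ltilde_insert_of_nonempty (z : β) {x : α} {Y : Finset α} (hY : Y.Nonempty)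
    (hx : x ∉ Y) : ltilde pd pz c z (insert x Y) = 0 := by
  have : (insert x Y).card ≠ 1 := by
    rw [card_insert_of_notMem hx]
    exact fun h => hY.ne_empty (card_eq_zero.mp (by omega))
  simp [ltilde, this]

variable [DecidableEq β]

noncomputable def lsWeight (Z : Finset β) (X : Finset α)
    (φ : {x // x ∈ X} → Option {z // z ∈ Z}) : ℝ :=
  (∏ u ∈ fiber φ none, (1 - pd u)) * ∏ z : {z // z ∈ Z}, ltilde pd pz c z.1 (fiber φ (some z))

theorem lsLik_eq_sum_lsWeight (Z : Finset β) (X : Finset α) :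
    lsLik pd pz c Z X = ∑ φ, lsWeight pd pz c Z X φ := rfl

variable {Z : Finset β} {X : Finset α} {x : α}

theorem lsWeight_insertArrowEquiv_symm_none (hx : x ∉ X)
    (f : {a // a ∈ X} → Option {z // z ∈ Z}) :
    lsWeight pd pz c Z (insert x X) ((insertArrowEquiv hx).symm (none, f)) =
      (1 - pd x) * lsWeight pd pz c Z X f := by
  simp only [lsWeight, fiber_insertArrowEquiv_symm, reduceCtorEq, ↓reduceIte,
    prod_insert (notMem_fiber hx f none)]
  ring

theorem lsWeight_insertArrowEquiv_symm_some_eq_zero (hx : x ∉ X) (z₀ : {z // z ∈ Z})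
    (f : {a // a ∈ X} → Option {z // z ∈ Z}) (hf : (fiber f (some z₀)).Nonempty) :
    lsWeight pd pz c Z (insert x X) ((insertArrowEquiv hx).symm (some z₀, f)) = 0 := by
  refine mul_eq_zero_of_right _ (prod_eq_zero (mem_univ z₀) ?_)
  rw [fiber_insertArrowEquiv_symm, if_pos rfl]
  exact ltilde_insert_of_nonempty pd pz c _ hf (notMem_fiber hx f _)

theorem lsWeight_insertArrowEquiv_symm_some_comp (hx : x ∉ X) (z₀ : {z // z ∈ Z})
    (f : {a // a ∈ X} → Option {z // z ∈ Z.erase z₀}) :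
    lsWeight pd pz c Z (insert x X)
        ((insertArrowEquiv hx).symm (some z₀, Option.map (eraseInclusion Z z₀) ∘ f)) =
      ltilde pd pz c z₀ {x} * lsWeight pd pz c (Z.erase z₀) X f := by
  have hinj : Injective (Option.map (eraseInclusion Z z₀)) :=
    Option.map_injective (eraseInclusion Z z₀).injective
  have hz₀ : fiber (Option.map (eraseInclusion Z z₀) ∘ f) (some z₀) = ∅ :=
    fiber_eq_empty_iff.mpr fun a h => by
      obtain ⟨d, -, hd⟩ := Option.map_eq_some_iff.mp h
      exact eraseInclusion_ne z₀ d hd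
  have hne : ∀ d, some z₀ ≠ some (eraseInclusion Z z₀ d) :=
    fun d h => eraseInclusion_ne z₀ d (Option.some_injective _ h).symm
  rw [lsWeight, Fintype.prod_eq_mul_prod_compl z₀, ← map_univ_eraseInclusion, prod_map]
  simp only [fiber_insertArrowEquiv_symm, reduceCtorEq, ↓reduceIte, hz₀, hne, insert_empty_eq,
    coe_eraseInclusion, fiber_comp_of_injective hinj f (w := none) (d := none) rfl,
    fun d => fiber_comp_of_injective hinj f (w := some (eraseInclusion Z z₀ d)) (d := some d) rfl]
  rw [lsWeight]
  ring

theorem sum_lsWeight_insertArrowEquiv_symm_some (hx : x ∉ X) (z₀ : {z // z ∈ Z}) :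
    ∑ f, lsWeight pd pz c Z (insert x X) ((insertArrowEquiv hx).symm (some z₀, f)) =
      ltilde pd pz c z₀ {x} * lsLik pd pz c (Z.erase z₀) X := by
  rw [lsLik_eq_sum_lsWeight, mul_sum]
  refine (Fintype.sum_of_injective (Option.map (eraseInclusion Z z₀) ∘ ·)
    (Option.map_injective (eraseInclusion Z z₀).injective).comp_left _ _ ?_
    fun f => (lsWeight_insertArrowEquiv_symm_some_comp pd pz c hx z₀ f).symm).symm
  -- assignments sending a point of `X` to `z₀` contribute nothing, the others factor through
  -- `Z.erase z₀`
  intro f hf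
  refine lsWeight_insertArrowEquiv_symm_some_eq_zero pd pz c hx z₀ f
    (nonempty_iff_ne_empty.mpr fun hempty => hf ?_)
  choose g hg using fun a => exists_optionMap_eraseInclusion (fiber_eq_empty_iff.mp hempty a)
  exact ⟨g, funext hg⟩

end Likelihood

/-- Recursion of the measurement-indexed likelihood in the target argument:
for `x' ∉ X`,
`l_s(Z | X ∪ {x'}) = (1-p_d(x')) l_s(Z|X) + ∑_{z∈Z} l̃(z|{x'}) l_s(Z\{z}|X)`. -/
theorem lsLik_insert_target {α β : Type*} [DecidableEq α] [DecidableEq β]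
    (pd : α → ℝ) (pz : β → α → ℝ) (c : β → ℝ)
    (Z : Finset β) (X : Finset α) (x' : α) (hx : x' ∉ X) :
    lsLik pd pz c Z (insert x' X) =
      (1 - pd x') * lsLik pd pz c Z X +
        ∑ z ∈ Z, ltilde pd pz c z {x'} * lsLik pd pz c (Z.erase z) X := by
  rw [lsLik_eq_sum_lsWeight, ← (insertArrowEquiv hx).symm.sum_comp, Fintype.sum_prod_type,
    Fintype.sum_option]
  simp only [lsWeight_insertArrowEquiv_symm_none pd pz c hx,
    sum_lsWeight_insertArrowEquiv_symm_some pd pz c hx, ← mul_sum, ← lsLik_eq_sum_lsWeight]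
  rw [sum_coe_sort Z fun z => ltilde pd pz c z {x'} * lsLik pd pz c (Z.erase z) X]
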